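/- Let B be a real Banach space, T > 0, m ∈ ℕ with m ≥ 1, τ := T/m and t_k := k·τ for k = 0, …, m. Let g : [0,T] → B be Bochner integrable with ∫₀^T ‖g(t)‖_B² dt < ∞, and let f : [0,T] → B satisfy f(t) = f(0) + ∫₀ᵗ g(s) ds for all t ∈ [0,T]. Define f_k := (1/τ)·∫_{t_{k−1}}^{t_k} f(s) ds for k = 1, …, m, f₀ := f(0), the piecewise linear interpolant f_τ(t) := f_{k−1} + ((t − t_{k−1})/τ)·(f_k − f_{k−1}) and the piecewise constant interpolant f̄_τ(t) := f_k for t ∈ (t_{k−1}, t_k]. Then for every t ∈ (0,T], ‖f_τ(t) − f̄_τ(t)‖_B ≤ (2τ)^{1/2}·(∫₀^T ‖g(r)‖_B² dr)^{1/2}. -/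

import Mathlib

/-!
By Cauchy–Schwarz, `f = f 0 + ∫₀ g` is `1/2`-Hölder on `[0, T]`:
`‖f b - f a‖ ≤ (b - a)^{1/2} ‖g‖_{L²}`. For `k ≥ 2` the difference `f_k - f_{k-1}` is the
average over `[t_{k-2}, t_{k-1}]` of `s ↦ f (s + τ) - f s`, and `f_1 - f_0` is the average over
`[0, τ]` of `s ↦ f s - f 0`; either way it is at most `τ^{1/2} ‖g‖_{L²}`. On `(t_{k-1}, t_k]` the
two interpolants differ by `(1 - θ) (f_{k-1} - f_k)` with `θ ∈ [0, 1]`.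
-/

open MeasureTheory intervalIntegral Set

section
variable {B : Type*} [NormedAddCommGroup B] [NormedSpace ℝ B]

theorem norm_intervalIntegral_le_sqrt_mul_sqrt {g : ℝ → B} {a b : ℝ} (hab : a ≤ b)
    (hg : AEStronglyMeasurable g (volume.restrict (Ioc a b)))
    (hg2 : IntervalIntegrable (fun t => ‖g t‖ ^ 2) volume a b) :
    ‖∫ s in a..b, g s‖ ≤
      (b - a) ^ (1 / 2 : ℝ) * (∫ s in a..b, ‖g s‖ ^ 2) ^ (1 / 2 : ℝ) := by
  set μ := volume.restrict (Ioc a b)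
  have hL2 : MemLp (fun s => ‖g s‖) (ENNReal.ofReal 2) μ := by
    rw [ENNReal.ofReal_ofNat]
    exact (memLp_two_iff_integrable_sq hg.norm).2 hg2.1
  have hHolder := integral_mul_le_Lp_mul_Lq_of_nonneg (μ := μ) .two_two
    (.of_forall fun _ => norm_nonneg _) (.of_forall fun _ => zero_le_one) hL2
    (memLp_const (1 : ℝ))
  simp only [mul_one, one_pow, Real.rpow_two, MeasureTheory.integral_const, smul_eq_mul] at hHolder
  rw [measureReal_restrict_apply_univ, Real.volume_real_Ioc_of_le hab] at hHolder
  calc ‖∫ s in a..b, g s‖ ≤ ∫ s in a..b, ‖g s‖ := norm_integral_le_integral_norm hab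
    _ = ∫ s, ‖g s‖ ∂μ := integral_of_le hab
    _ ≤ _ := hHolder
    _ = _ := by rw [mul_comm, integral_of_le hab]

theorem norm_sub_le_of_eq_add_integral {T : ℝ} {f g : ℝ → B}
    (hg : IntegrableOn g (Icc 0 T)) (hg2 : IntegrableOn (fun t => ‖g t‖ ^ 2) (Icc 0 T))
    (hf : ∀ t ∈ Icc (0 : ℝ) T, f t = f 0 + ∫ s in (0 : ℝ)..t, g s)
    {a b : ℝ} (ha : 0 ≤ a) (hab : a ≤ b) (hb : b ≤ T) :
    ‖f b - f a‖ ≤ (b - a) ^ (1 / 2 : ℝ) * (∫ r in (0 : ℝ)..T, ‖g r‖ ^ 2) ^ (1 / 2 : ℝ) := by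
  have hsub : ∀ {c d}, 0 ≤ c → c ≤ d → d ≤ T → uIcc c d ⊆ Icc 0 T := fun hc hcd hd => by
    rw [uIcc_of_le hcd]; exact Icc_subset_Icc hc hd
  have hg_on : ∀ {c d}, 0 ≤ c → c ≤ d → d ≤ T → IntervalIntegrable g volume c d :=
    fun hc hcd hd => (hg.mono_set (hsub hc hcd hd)).intervalIntegrable
  have hdiff : f b - f a = ∫ s in a..b, g s := by
    rw [hf b ⟨ha.trans hab, hb⟩, hf a ⟨ha, hab.trans hb⟩, add_sub_add_left_eq_sub,
      integral_interval_sub_left (hg_on le_rfl (ha.trans hab) hb) (hg_on le_rfl ha (hab.trans hb))]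
  have hmono : ∫ s in a..b, ‖g s‖ ^ 2 ≤ ∫ r in (0 : ℝ)..T, ‖g r‖ ^ 2 :=
    integral_mono_interval ha hab hb (.of_forall fun _ => by positivity)
      (hg2.mono_set (hsub le_rfl (ha.trans (hab.trans hb)) le_rfl)).intervalIntegrable
  rw [hdiff]
  refine (norm_intervalIntegral_le_sqrt_mul_sqrt hab (hg_on ha hab hb).1.aestronglyMeasurable
    (hg2.mono_set (hsub ha hab hb)).intervalIntegrable).trans ?_
  gcongr
  exact integral_nonneg hab fun _ _ => by positivity

theorem norm_smul_intervalIntegral_le {h : ℝ → B} {a τ C : ℝ} (hτ : 0 < τ)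
    (hC : ∀ s ∈ Icc a (a + τ), ‖h s‖ ≤ C) :
    ‖(1 / τ) • ∫ s in a..a + τ, h s‖ ≤ C := by
  have hbound := norm_integral_le_of_norm_le_const fun s hs =>
    hC s (Ioc_subset_Icc_self (uIoc_of_le (le_add_of_nonneg_right hτ.le) ▸ hs))
  rw [add_sub_cancel_left, abs_of_pos hτ] at hbound
  rw [norm_smul, Real.norm_of_nonneg (by positivity), one_div_mul_eq_div, div_le_iff₀' hτ]
  linarith

noncomputable def stepAverage (f : ℝ → B) (τ : ℝ) (k : ℕ) : B :=
  if k = 0 then f 0 else (1 / τ) • ∫ s in ((k : ℝ) - 1) * τ..(k : ℝ) * τ, f s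

theorem stepAverage_succ (f : ℝ → B) (τ : ℝ) (j : ℕ) :
    stepAverage f τ (j + 1) = (1 / τ) • ∫ s in j * τ..j * τ + τ, f s := by
  simp only [stepAverage, Nat.add_one_ne_zero, if_false, Nat.cast_succ, add_sub_cancel_right,
    add_mul, one_mul]

theorem norm_stepAverage_sub_le [CompleteSpace B] {f : ℝ → B} {T τ C : ℝ} (hτ : 0 < τ)
    (hcont : ContinuousOn f (Icc 0 T))
    (hmod : ∀ a b, 0 ≤ a → a ≤ b → b ≤ T → b - a ≤ τ → ‖f b - f a‖ ≤ C)
    {k : ℕ} (hk : 1 ≤ k) (hkT : k * τ ≤ T) :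
    ‖stepAverage f τ k - stepAverage f τ (k - 1)‖ ≤ C := by
  have hint : ∀ {c d}, 0 ≤ c → c ≤ d → d ≤ T → IntervalIntegrable f volume c d :=
    fun hc hcd hd =>
      (hcont.mono (by rw [uIcc_of_le hcd]; exact Icc_subset_Icc hc hd)).intervalIntegrable
  obtain ⟨j, rfl⟩ := Nat.exists_eq_add_of_le' hk
  rw [Nat.add_sub_cancel, stepAverage_succ]
  rw [Nat.cast_succ, add_one_mul] at hkT
  rcases j with _ | i
  · simp only [Nat.cast_zero, zero_mul, zero_add] at hkT ⊢
    have hsplit : ((1 / τ) • ∫ s in (0 : ℝ)..τ, f s) - f 0 =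
        (1 / τ) • ∫ s in (0 : ℝ)..τ, (f s - f 0) := by
      rw [integral_sub (hint le_rfl hτ.le hkT) intervalIntegrable_const,
        intervalIntegral.integral_const, sub_zero, smul_sub, smul_smul, one_div_mul_cancel hτ.ne',
        one_smul]
    rw [show stepAverage f τ 0 = f 0 from if_pos rfl, hsplit]
    simpa only [zero_add] using norm_smul_intervalIntegral_le (a := 0) hτ fun s hs =>
      hmod 0 s le_rfl hs.1 (by linarith [hs.2]) (by linarith [hs.2])
  · push_cast at hkT ⊢
    set a := (i : ℝ) * τ
    have ha : 0 ≤ a := by positivity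
    have hshift : ∫ s in (i + 1 : ℝ) * τ..(i + 1 : ℝ) * τ + τ, f s =
        ∫ s in a..a + τ, f (s + τ) := by
      rw [integral_comp_add_right, add_one_mul]
    rw [stepAverage_succ, hshift, ← smul_sub, ← intervalIntegral.integral_sub]
    · exact norm_smul_intervalIntegral_le hτ fun s hs =>
        hmod s (s + τ) (ha.trans hs.1) (by linarith) (by linarith [hs.2]) (by simp)
    · simpa only [add_sub_cancel_right] using
        (hint (c := a + τ) (d := a + τ + τ) (by positivity) (by linarith) (by linarith)
          ).comp_add_right τ
    · exact hint ha (by linarith) (by linarith)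

theorem mem_Icc_natCeil_div_mul {t τ : ℝ} (hτ : 0 < τ) (ht : 0 ≤ t) :
    t ∈ Icc (((⌈t / τ⌉₊ : ℝ) - 1) * τ) (⌈t / τ⌉₊ * τ) := by
  have hlt := Nat.ceil_lt_add_one (div_nonneg ht hτ.le)
  rw [← sub_lt_iff_lt_add, lt_div_iff₀ hτ] at hlt
  exact ⟨hlt.le, (div_le_iff₀ hτ).1 (Nat.le_ceil _)⟩

theorem continuousOn_of_eq_add_integral {T : ℝ} (hT : 0 ≤ T) {f g : ℝ → B}
    (hg : IntegrableOn g (Icc 0 T))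
    (hf : ∀ t ∈ Icc (0 : ℝ) T, f t = f 0 + ∫ s in (0 : ℝ)..t, g s) :
    ContinuousOn f (Icc 0 T) := by
  rw [← uIcc_of_le hT] at hg ⊢
  exact (continuousOn_const.add (continuousOn_primitive_interval hg)).congr fun t ht =>
    hf t (uIcc_of_le hT ▸ ht)

theorem norm_add_smul_sub_sub_le (x y : B) {θ : ℝ} (h0 : 0 ≤ θ) (h1 : θ ≤ 1) :
    ‖x + θ • (y - x) - y‖ ≤ ‖y - x‖ := by
  have : x + θ • (y - x) - y = (1 - θ) • (x - y) := by module
  rw [this, norm_smul, Real.norm_of_nonneg (by linarith), norm_sub_rev]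
  exact mul_le_of_le_one_left (norm_nonneg _) (by linarith)

end

theorem stmt12_general {B : Type*} [NormedAddCommGroup B] [NormedSpace ℝ B] [CompleteSpace B]
    (T : ℝ) (m : ℕ) (hm : 1 ≤ m) (g f : ℝ → B)
    (hg : IntegrableOn g (Set.Icc 0 T))
    (hg2 : IntegrableOn (fun t => ‖g t‖ ^ 2) (Set.Icc 0 T))
    (hf : ∀ t ∈ Set.Icc (0 : ℝ) T, f t = f 0 + ∫ s in (0 : ℝ)..t, g s) :
    let τ : ℝ := T / m
    let fk : ℕ → B := fun k =>
      if k = 0 then f 0 else (1 / τ) • ∫ s in (((k : ℝ) - 1) * τ)..((k : ℝ) * τ), f s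
    ∀ t ∈ Set.Ioc (0 : ℝ) T,
      ‖(fk (⌈t / τ⌉₊ - 1) +
            ((t - ((⌈t / τ⌉₊ : ℝ) - 1) * τ) / τ) • (fk ⌈t / τ⌉₊ - fk (⌈t / τ⌉₊ - 1))) -
          fk ⌈t / τ⌉₊‖ ≤
        (2 * τ) ^ ((1 : ℝ) / 2) * (∫ r in (0 : ℝ)..T, ‖g r‖ ^ 2) ^ ((1 : ℝ) / 2) := by
  intro τ fk t ⟨ht0, htT⟩
  have hT : 0 < T := ht0.trans_le htT
  have hm0 : (0 : ℝ) < m := by exact_mod_cast hm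
  have hτ : 0 < τ := div_pos hT hm0
  have hmτ : m * τ = T := mul_div_cancel₀ T hm0.ne'
  set k := ⌈t / τ⌉₊
  have hk : 1 ≤ k := Nat.one_le_ceil_iff.2 (div_pos ht0 hτ)
  obtain ⟨hlower, hupper⟩ := mem_Icc_natCeil_div_mul hτ ht0.le
  have hkT : k * τ ≤ T := by
    rw [← hmτ]
    gcongr
    exact_mod_cast Nat.ceil_le.2 ((div_le_iff₀ hτ).2 (hmτ ▸ htT))
  have hθ0 : 0 ≤ (t - ((k : ℝ) - 1) * τ) / τ := div_nonneg (by linarith) hτ.le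
  have hθ1 : (t - ((k : ℝ) - 1) * τ) / τ ≤ 1 := (div_le_one hτ).2 (by linarith)
  set G := (∫ r in (0 : ℝ)..T, ‖g r‖ ^ 2) ^ (1 / 2 : ℝ)
  have hG : 0 ≤ G := Real.rpow_nonneg (integral_nonneg hT.le fun _ _ => by positivity) _
  have hmod : ∀ a b, 0 ≤ a → a ≤ b → b ≤ T → b - a ≤ τ → ‖f b - f a‖ ≤ τ ^ (1 / 2 : ℝ) * G :=
    fun a b ha hab hb hbaτ => (norm_sub_le_of_eq_add_integral hg hg2 hf ha hab hb).trans (by gcongr)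
  calc _ ≤ ‖stepAverage f τ k - stepAverage f τ (k - 1)‖ := norm_add_smul_sub_sub_le _ _ hθ0 hθ1
    _ ≤ τ ^ (1 / 2 : ℝ) * G :=
      norm_stepAverage_sub_le hτ (continuousOn_of_eq_add_integral hT.le hg hf) hmod hk hkT
    _ ≤ (2 * τ) ^ (1 / 2 : ℝ) * G := by gcongr; linarith

/-- The uniform-in-time distance between the piecewise linear and piecewise
constant interpolants of the local averages `f_k` is at most
`(2τ)^{1/2} (∫₀^T ‖g‖² dt)^{1/2}`. For `t ∈ (t_{k-1}, t_k]` one has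
`⌈t/τ⌉ = k`. -/
theorem stmt12 {B : Type*} [NormedAddCommGroup B] [NormedSpace ℝ B] [CompleteSpace B]
    (T : ℝ) (hT : 0 < T) (m : ℕ) (hm : 1 ≤ m) (g f : ℝ → B)
    (hg : IntegrableOn g (Set.Icc 0 T))
    (hg2 : IntegrableOn (fun t => ‖g t‖ ^ 2) (Set.Icc 0 T))
    (hf : ∀ t ∈ Set.Icc (0 : ℝ) T, f t = f 0 + ∫ s in (0 : ℝ)..t, g s) :
    let τ : ℝ := T / m
    let fk : ℕ → B := fun k =>
      if k = 0 then f 0 else (1 / τ) • ∫ s in (((k : ℝ) - 1) * τ)..((k : ℝ) * τ), f s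
    ∀ t ∈ Set.Ioc (0 : ℝ) T,
      ‖(fk (⌈t / τ⌉₊ - 1) +
            ((t - ((⌈t / τ⌉₊ : ℝ) - 1) * τ) / τ) • (fk ⌈t / τ⌉₊ - fk (⌈t / τ⌉₊ - 1))) -
          fk ⌈t / τ⌉₊‖ ≤
        (2 * τ) ^ ((1 : ℝ) / 2) * (∫ r in (0 : ℝ)..T, ‖g r‖ ^ 2) ^ ((1 : ℝ) / 2) :=
  stmt12_general T m hm g f hg hg2 hf
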